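/- arXiv:1912.11741 — 3 statements merged into one kernel-verified Lean document; each statement's English description precedes it below -/
import Mathlib

section
/- For every integer d ≥ 1, every σ > 0, and every 0 < ε ≤ 1, set y := ln(4/ε) and let w > 0 be the unique positive real with w·e^{w} = y/(e·σ²). Then ln N(ε, U_σ(B_2^d)) ≤ binom(2y/w + d, d) · y. -/
open Real Filter MeasureTheory

/-- Generalized binomial coefficient `binom(t+d, d) = (1/d!) ∏_{i=1}^d (t+i)`. -/
noncomputable def gbinom (t : ℝ) (d : ℕ) : ℝ :=
  (∏ i ∈ Finset.range d, (t + (i : ℝ) + 1)) / (Nat.factorial d : ℝ)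

/-- Covering number of a set of real-valued functions w.r.t. the sup distance,
by bounded functions. -/
noncomputable def covN {α : Type*} (ε : ℝ) (A : Set (α → ℝ)) : ℕ :=
  sInf {n : ℕ | ∃ g : Fin n → (α → ℝ),
    (∀ i, ∃ C : ℝ, ∀ y, |g i y| ≤ C) ∧
    ∀ f ∈ A, ∃ i, ∀ y, |f y - g i y| ≤ ε}

/-- The functions `e_k^σ` forming an ONB of the Gaussian RKHS. -/
noncomputable def ek (d : ℕ) (σ : ℝ) (k : Fin d → ℕ) (x : EuclideanSpace ℝ (Fin d)) : ℝ :=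
  Real.sqrt ((2 * σ ^ 2) ^ (∑ i, k i) / ∏ i, (Nat.factorial (k i) : ℝ)) *
    (∏ i, x i ^ k i) * Real.exp (-σ ^ 2 * ‖x‖ ^ 2)

/-- The image `U_σ(Y)` of the closed unit ball of the Gaussian RKHS on `Y`. -/
noncomputable def UBall (d : ℕ) (σ : ℝ) (Y : Set (EuclideanSpace ℝ (Fin d))) :
    Set (Y → ℝ) :=
  {f | ∃ a : (Fin d → ℕ) → ℝ,
    Summable (fun k => a k ^ 2) ∧ (∑' k, a k ^ 2) ≤ 1 ∧
    (∀ x : Y, Summable (fun k => |a k * ek d σ k ↑x|)) ∧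
    (∀ x : Y, f x = ∑' k, a k * ek d σ k ↑x)}

/-- The closed Euclidean unit ball of `ℝ^d`. -/
def B2 (d : ℕ) : Set (EuclideanSpace ℝ (Fin d)) := Metric.closedBall 0 1

/-!
Truncate the expansion `f = ∑ a_k e_k^σ` at total degree `m = ⌊2y/w⌋`. By the multinomial
theorem, `∑_{|k| = j} e_k^σ(x)² = e^{-t} t^j / j!` with `t = 2σ²‖x‖²`, so on the unit ball the
discarded part satisfies `∑_{|k| > m} e_k^σ(x)² ≤ (2σ²)^{m+1} / (m+1)!`. Since `n^n ≤ n! eⁿ`, this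
is at most `(2σ²e / (m+1))^{m+1}`, and the defining relation of `w` says exactly
`2σ²e = (2y/w) e^{-w}`, whence the bound `e^{-w(m+1)} ≤ e^{-2y} = (ε/4)²`; by Cauchy–Schwarz the
tail of every `f` is uniformly at most `ε/4`. The truncated part is an inner product of the
coefficient vector, which lies in the unit ball of `ℝ^K` for `K = {k : |k| ≤ m}`, with a vector of
norm at most `1`, so a `3ε/4`-net of that ball yields an `ε`-cover of `U_σ(B_2^d)`. The volumetric
bound gives a net of size `(1 + 8/(3ε))^{|K|} ≤ (4/ε)^{|K|}`, and `|K| = binom(m+d, d)`.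
-/

open Finset
open scoped Nat

lemma sum_pow_div_factorial_le_mul_exp {t : ℝ} (ht : 0 ≤ t) {M : ℕ} {T : Finset ℕ}
    (hT : ∀ j ∈ T, M ≤ j) : ∑ j ∈ T, t ^ j / j ! ≤ t ^ M / M ! * exp t := by
  have hterm : ∀ j ∈ T, t ^ j / j ! ≤ t ^ M / M ! * (t ^ (j - M) / (j - M)!) := by
    intro j hj
    obtain ⟨i, rfl⟩ := Nat.exists_eq_add_of_le (hT j hj)
    rw [Nat.add_sub_cancel_left, div_mul_div_comm, pow_add]
    gcongr
    exact_mod_cast Nat.le_of_dvd (Nat.factorial_pos _)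
      (Nat.factorial_mul_factorial_dvd_factorial_add M i)
  have hexp : HasSum (fun n : ℕ => t ^ n / n !) (exp t) := by
    rw [exp_eq_exp_ℝ]; exact NormedSpace.expSeries_div_hasSum_exp t
  calc ∑ j ∈ T, t ^ j / j ! ≤ ∑ j ∈ T, t ^ M / M ! * (t ^ (j - M) / (j - M)!) := sum_le_sum hterm
    _ = t ^ M / M ! * ∑ i ∈ T.image (· - M), t ^ i / i ! := by
      rw [mul_sum, sum_image fun j hj j' hj' h => by
        have := hT j hj; have := hT j' hj'; omega]
    _ ≤ t ^ M / M ! * exp t := by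
      gcongr
      exact sum_le_hasSum _ (fun n _ => by positivity) hexp

lemma pow_div_factorial_le_exp_neg_mul {s w : ℝ} (hs : 0 ≤ s) {M : ℕ} (hM : 0 < M)
    (hsM : s * exp 1 * exp w ≤ M) : s ^ M / M ! ≤ exp (-(w * M)) := by
  have hMpos : (0 : ℝ) < M := by exact_mod_cast hM
  have hfact : (M : ℝ) ^ M / M ! ≤ exp M := pow_div_factorial_le_exp _ hMpos.le M
  have hbase : s * exp 1 / M ≤ exp (-w) := by
    rw [div_le_iff₀ hMpos, exp_neg, ← div_eq_inv_mul, le_div_iff₀ (exp_pos w)]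
    exact hsM
  calc s ^ M / M ! = (s / M) ^ M * ((M : ℝ) ^ M / M !) := by
        rw [div_pow, div_mul_div_comm, mul_comm (s ^ M), mul_div_mul_left _ _ (by positivity)]
    _ ≤ (s / M) ^ M * exp M := by gcongr
    _ = (s * exp 1 / M) ^ M := by
        rw [mul_div_right_comm, mul_pow, ← exp_nat_mul, mul_one]
    _ ≤ exp (-w) ^ M := by gcongr
    _ = exp (-(w * M)) := by rw [← exp_nat_mul]; ring_nf

lemma abs_tsum_mul_le_sqrt_mul_sqrt {ι : Type*} {f g : ι → ℝ} (hf : Summable fun i => f i ^ 2)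
    (hg : Summable fun i => g i ^ 2) :
    |∑' i, f i * g i| ≤ √(∑' i, f i ^ 2) * √(∑' i, g i ^ 2) := by
  have hfg : Summable fun i => |f i| * |g i| :=
    ((hf.add hg).div_const 2).of_nonneg_of_le (fun i => by positivity) fun i => by
      nlinarith [sq_nonneg (|f i| - |g i|), sq_abs (f i), sq_abs (g i)]
  calc |∑' i, f i * g i| ≤ ∑' i, |f i| * |g i| := by
        simpa only [Real.norm_eq_abs, abs_mul] using
          norm_tsum_le_tsum_norm (f := fun i => f i * g i) (by simpa [abs_mul] using hfg)
    _ ≤ √(∑' i, f i ^ 2) * √(∑' i, g i ^ 2) := hfg.tsum_le_of_sum_le fun S => by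
        refine (sum_mul_le_sqrt_mul_sqrt S _ _).trans ?_
        simp only [sq_abs]
        gcongr
        · exact hf.sum_le_tsum S fun i _ => sq_nonneg _
        · exact hg.sum_le_tsum S fun i _ => sq_nonneg _

lemma card_piAntidiag_univ_fin (d j : ℕ) :
    #(piAntidiag (univ : Finset (Fin d)) j) = d.multichoose j := by
  rw [← map_sym_eq_piAntidiag, card_map, sym_univ, card_univ, Sym.card_sym_eq_multichoose,
    Fintype.card_fin]

def degLE (d m : ℕ) : Finset (Fin d → ℕ) :=
  (range (m + 1)).biUnion fun j => piAntidiag univ j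

lemma mem_degLE {d m : ℕ} {k : Fin d → ℕ} : k ∈ degLE d m ↔ ∑ i, k i ≤ m := by
  simp [degLE]

lemma card_degLE (d m : ℕ) : #(degLE d m) = (m + d).choose d := by
  have hdisj : ∀ j ∈ range (m + 1), ∀ j' ∈ range (m + 1), j ≠ j' →
      Disjoint (piAntidiag (univ : Finset (Fin d)) j) (piAntidiag univ j') :=
    fun j _ j' _ h => disjoint_left.2 fun k hj hj' =>
      h ((mem_piAntidiag.1 hj).1.symm.trans (mem_piAntidiag.1 hj').1)
  rw [degLE, card_biUnion hdisj]
  simp_rw [card_piAntidiag_univ_fin, Nat.sum_range_multichoose]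

lemma gbinom_natCast (m d : ℕ) : gbinom m d = (m + d).choose d := by
  have h := Nat.ascFactorial_eq_factorial_mul_choose m d
  rw [Nat.ascFactorial_eq_prod_range] at h
  rw [gbinom, div_eq_iff (by positivity)]
  have h' := congrArg (fun n : ℕ => (n : ℝ)) h
  push_cast at h'
  rw [mul_comm, ← h']
  exact prod_congr rfl fun i _ => by ring

lemma gbinom_mono (d : ℕ) {s t : ℝ} (hs : 0 ≤ s) (hst : s ≤ t) : gbinom s d ≤ gbinom t d := by
  unfold gbinom
  gcongr

lemma sum_pow_div_factorial_eq_sum_piAntidiag {ι R : Type*} [DecidableEq ι] [Field R] [CharZero R]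
    (s : Finset ι) (c : ι → R) (n : ℕ) :
    (∑ i ∈ s, c i) ^ n / n ! = ∑ k ∈ piAntidiag s n, ∏ i ∈ s, c i ^ k i / (k i)! := by
  rw [sum_pow_eq_sum_piAntidiag, sum_div]
  refine sum_congr rfl fun k hk => ?_
  have hspec := Nat.multinomial_spec s k
  rw [(mem_piAntidiag.1 hk).1] at hspec
  have hmult : (Nat.multinomial s k : R) ≠ 0 := by exact_mod_cast (Nat.multinomial_pos s k).ne'
  rw [prod_div_distrib, ← Nat.cast_prod, ← hspec, Nat.cast_mul, mul_comm (Nat.multinomial s k : R),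
    mul_div_mul_right _ _ hmult]

section Packing

open Metric Module
open scoped ENNReal NNReal

variable {E : Type*} [NormedAddCommGroup E] [NormedSpace ℝ E] [FiniteDimensional ℝ E]

lemma card_le_of_isSeparated_closedBall {δ : ℝ≥0} (hδ : 0 < δ) {r : ℝ} (hr : 0 ≤ r)
    {S : Finset E} (hSr : (S : Set E) ⊆ closedBall 0 r) (hS : IsSeparated δ (S : Set E)) :
    (#S : ℝ) ≤ (1 + 2 * r / δ) ^ finrank ℝ E := by
  borelize E
  set μ : Measure E := Measure.addHaar
  set n := finrank ℝ E
  have hδ' : (0 : ℝ) < δ := hδ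
  have hdisj : (S : Set E).PairwiseDisjoint fun s => ball s (δ / 2) := fun s hs t ht hst => by
    have hdist : (δ : ℝ) < dist s t := by
      have h : (δ : ℝ≥0∞) < edist s t := hS hs ht hst
      rwa [edist_nndist, ENNReal.coe_lt_coe, ← NNReal.coe_lt_coe, coe_nndist] at h
    exact ball_disjoint_ball (by linarith)
  have hsub : ⋃ s ∈ S, ball s (δ / 2) ⊆ ball 0 (r + δ / 2) := by
    simp only [Set.iUnion_subset_iff]
    intro s hs
    exact ball_subset_ball' (by linarith [mem_closedBall.1 (hSr hs)])
  have hvol : (#S : ℝ≥0∞) * ENNReal.ofReal ((δ / 2) ^ n) * μ (ball 0 1)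
      ≤ ENNReal.ofReal ((r + δ / 2) ^ n) * μ (ball 0 1) :=
    calc (#S : ℝ≥0∞) * ENNReal.ofReal ((δ / 2) ^ n) * μ (ball 0 1)
        = ∑ s ∈ S, μ (ball s (δ / 2)) := by
          simp [Measure.addHaar_ball_of_pos μ _ (half_pos hδ'), mul_assoc, n]
      _ = μ (⋃ s ∈ S, ball s (δ / 2)) :=
          (measure_biUnion_finset hdisj fun _ _ => measurableSet_ball).symm
      _ ≤ μ (ball 0 (r + δ / 2)) := measure_mono hsub
      _ = ENNReal.ofReal ((r + δ / 2) ^ n) * μ (ball 0 1) :=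
          Measure.addHaar_ball_of_pos μ _ (by positivity)
  rw [ENNReal.mul_le_mul_iff_left (measure_ball_pos μ 0 one_pos).ne' measure_ball_lt_top.ne,
    ← ENNReal.ofReal_natCast, ← ENNReal.ofReal_mul (by positivity),
    ENNReal.ofReal_le_ofReal_iff (by positivity)] at hvol
  calc (#S : ℝ) ≤ (r + δ / 2) ^ n / (δ / 2) ^ n := by rwa [le_div_iff₀ (by positivity)]
    _ = (1 + 2 * r / δ) ^ n := by rw [← div_pow]; congr 1; field_simp; ring

lemma exists_finset_isCover_closedBall {δ : ℝ≥0} (hδ : 0 < δ) {r : ℝ} (hr : 0 ≤ r) :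
    ∃ P : Finset E, (#P : ℝ) ≤ (1 + 2 * r / δ) ^ finrank ℝ E ∧
      IsCover δ (closedBall (0 : E) r) (P : Set E) := by
  set A := closedBall (0 : E) r
  set b := (1 + 2 * r / δ) ^ finrank ℝ E
  have hsep : ∀ C ⊆ A, IsSeparated δ C → C.encard ≤ ⌊b⌋₊ := by
    intro C hCA hC
    by_contra! hlt
    obtain ⟨T, hTC, hT⟩ := Set.exists_subset_encard_eq (Order.add_one_le_of_lt hlt)
    have hTfin : T.Finite := Set.finite_of_encard_eq_coe hT
    have hcard := card_le_of_isSeparated_closedBall hδ hr (S := hTfin.toFinset)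
      (by simpa using hTC.trans hCA) (by simpa using hC.subset hTC)
    rw [hTfin.encard_eq_coe_toFinset_card] at hT
    have hTcard : #hTfin.toFinset = ⌊b⌋₊ + 1 := by exact_mod_cast hT
    rw [hTcard] at hcard
    push_cast at hcard
    linarith [Nat.lt_floor_add_one b]
  have hpack : packingNumber δ A ≠ ⊤ :=
    ne_top_of_le_ne_top (ENat.natCast_ne_top ⌊b⌋₊) (iSup₂_le fun C hCA => iSup_le (hsep C hCA))
  have hfin : (maximalSeparatedSet δ A).Finite :=
    Set.finite_of_encard_le_coe (hsep _ maximalSeparatedSet_subset isSeparated_maximalSeparatedSet)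
  refine ⟨hfin.toFinset, card_le_of_isSeparated_closedBall hδ hr ?_ ?_, ?_⟩
  · simpa using maximalSeparatedSet_subset
  · simpa using isSeparated_maximalSeparatedSet
  · simpa using isCover_maximalSeparatedSet hpack

end Packing

section GaussianFeatures

variable {d : ℕ} {σ : ℝ} (x : EuclideanSpace ℝ (Fin d))

lemma ek_sq (k : Fin d → ℕ) :
    ek d σ k x ^ 2
      = (∏ i, (2 * σ ^ 2 * x i ^ 2) ^ k i / (k i)!) * exp (-(2 * σ ^ 2 * ‖x‖ ^ 2)) := by
  rw [ek, mul_pow, mul_pow, sq_sqrt (by positivity), ← exp_nat_mul, prod_div_distrib, ← prod_pow,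
    ← prod_pow_eq_pow_sum]
  simp_rw [mul_pow, ← pow_mul, prod_mul_distrib]
  ring_nf

lemma sum_piAntidiag_ek_sq (j : ℕ) :
    ∑ k ∈ piAntidiag univ j, ek d σ k x ^ 2
      = (2 * σ ^ 2 * ‖x‖ ^ 2) ^ j / j ! * exp (-(2 * σ ^ 2 * ‖x‖ ^ 2)) := by
  have hnorm : 2 * σ ^ 2 * ‖x‖ ^ 2 = ∑ i, 2 * σ ^ 2 * x i ^ 2 := by
    simp [EuclideanSpace.norm_sq_eq, mul_sum]
  simp_rw [ek_sq, ← sum_mul]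
  rw [hnorm, sum_pow_div_factorial_eq_sum_piAntidiag]

lemma sum_ek_sq_le {M : ℕ} {S : Finset (Fin d → ℕ)} (hS : ∀ k ∈ S, M ≤ ∑ i, k i) :
    ∑ k ∈ S, ek d σ k x ^ 2 ≤ (2 * σ ^ 2 * ‖x‖ ^ 2) ^ M / M ! := by
  classical
  set t := 2 * σ ^ 2 * ‖x‖ ^ 2
  set deg : (Fin d → ℕ) → ℕ := fun k => ∑ i, k i
  have hfiber : ∀ j, ∑ k ∈ S with deg k = j, ek d σ k x ^ 2
      ≤ ∑ k ∈ piAntidiag univ j, ek d σ k x ^ 2 := fun j =>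
    sum_le_sum_of_subset_of_nonneg (fun k hk => by simp_all [deg]) fun _ _ _ => sq_nonneg _
  calc ∑ k ∈ S, ek d σ k x ^ 2
      = ∑ j ∈ S.image deg, ∑ k ∈ S with deg k = j, ek d σ k x ^ 2 :=
        (sum_fiberwise_of_maps_to (fun k hk => mem_image_of_mem deg hk) _).symm
    _ ≤ (∑ j ∈ S.image deg, t ^ j / j !) * exp (-t) := by
        rw [sum_mul]
        exact sum_le_sum fun j _ => (hfiber j).trans_eq (sum_piAntidiag_ek_sq x j)
    _ ≤ t ^ M / M ! * exp t * exp (-t) := by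
        gcongr
        exact sum_pow_div_factorial_le_mul_exp (by positivity) (by simpa [deg] using hS)
    _ = t ^ M / M ! := by rw [mul_assoc, ← exp_add, add_neg_cancel, exp_zero, mul_one]

lemma sum_ek_sq_le_one (S : Finset (Fin d → ℕ)) : ∑ k ∈ S, ek d σ k x ^ 2 ≤ 1 := by
  simpa using sum_ek_sq_le x (M := 0) (S := S) (by simp)

lemma summable_ek_sq : Summable fun k => ek d σ k x ^ 2 :=
  summable_of_sum_le (fun _ => sq_nonneg _) (sum_ek_sq_le_one x)

lemma tsum_ek_sq_le (hx : ‖x‖ ≤ 1) {M : ℕ} {s : Set (Fin d → ℕ)} (hs : ∀ k ∈ s, M ≤ ∑ i, k i) :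
    ∑' k : s, ek d σ k x ^ 2 ≤ (2 * σ ^ 2) ^ M / M ! := by
  refine ((summable_ek_sq x).subtype s).tsum_le_of_sum_le fun T => ?_
  calc ∑ k ∈ T, ek d σ k.1 x ^ 2
        = ∑ k ∈ T.map (Function.Embedding.subtype _), ek d σ k x ^ 2 := by rw [sum_map]; rfl
    _ ≤ (2 * σ ^ 2 * ‖x‖ ^ 2) ^ M / M ! := sum_ek_sq_le x fun k hkT => by
        obtain ⟨⟨k, hk⟩, -, rfl⟩ := mem_map.1 hkT
        exact hs k hk
    _ ≤ (2 * σ ^ 2) ^ M / M ! := by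
        gcongr ?_ ^ M / _
        exact mul_le_of_le_one_right (by positivity) (pow_le_one₀ (norm_nonneg x) hx)

end GaussianFeatures

lemma covN_le_card {α ι : Type*} [Fintype ι] {ε : ℝ} {A : Set (α → ℝ)} (g : ι → α → ℝ)
    (hg : ∀ i, ∃ C, ∀ y, |g i y| ≤ C) (hA : ∀ f ∈ A, ∃ i, ∀ y, |f y - g i y| ≤ ε) :
    covN ε A ≤ Fintype.card ι :=
  Nat.sInf_le ⟨g ∘ (Fintype.equivFin ι).symm, fun i => hg _, fun f hf => by
    obtain ⟨i, hi⟩ := hA f hf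
    exact ⟨Fintype.equivFin ι i, by simpa using hi⟩⟩

section Covering

open Metric
open scoped NNReal RealInnerProductSpace

variable {d : ℕ} {σ : ℝ}

noncomputable def ekVec (d : ℕ) (σ : ℝ) (K : Finset (Fin d → ℕ)) (x : EuclideanSpace ℝ (Fin d)) :
    EuclideanSpace ℝ K :=
  WithLp.toLp 2 fun k => ek d σ k x

lemma norm_ekVec_le_one (K : Finset (Fin d → ℕ)) (x : EuclideanSpace ℝ (Fin d)) :
    ‖ekVec d σ K x‖ ≤ 1 := by
  rw [← sq_le_one_iff₀ (norm_nonneg _), EuclideanSpace.norm_sq_eq]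
  simpa [ekVec, sum_attach K fun k => ek d σ k x ^ 2] using sum_ek_sq_le_one x K

lemma abs_tsum_compl_degLE_le {m : ℕ} {a : (Fin d → ℕ) → ℝ} (ha : Summable fun k => a k ^ 2)
    (ha1 : ∑' k, a k ^ 2 ≤ 1) {x : EuclideanSpace ℝ (Fin d)} (hx : ‖x‖ ≤ 1) :
    |∑' k : {k // k ∉ degLE d m}, a k * ek d σ k x| ≤ √((2 * σ ^ 2) ^ (m + 1) / (m + 1)!) :=
  calc |∑' k : {k // k ∉ degLE d m}, a k * ek d σ k x|
      ≤ √(∑' k : {k // k ∉ degLE d m}, a k ^ 2) * √(∑' k : {k // k ∉ degLE d m}, ek d σ k x ^ 2) :=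
        abs_tsum_mul_le_sqrt_mul_sqrt (ha.subtype _) ((summable_ek_sq x).subtype _)
    _ ≤ 1 * √((2 * σ ^ 2) ^ (m + 1) / (m + 1)!) := by
        gcongr
        · exact sqrt_le_one.2 ((ha.tsum_subtype_le _ _ fun _ => sq_nonneg _).trans ha1)
        · exact tsum_ek_sq_le x hx (s := {k | k ∉ degLE d m}) fun k hk => by
            simpa [mem_degLE] using hk
    _ = √((2 * σ ^ 2) ^ (m + 1) / (m + 1)!) := one_mul _

lemma covN_UBall_B2_le_card {m : ℕ} {δ : ℝ≥0} {η : ℝ}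
    (hη : √((2 * σ ^ 2) ^ (m + 1) / (m + 1)!) ≤ η) {P : Finset (EuclideanSpace ℝ (degLE d m))}
    (hP : IsCover δ (closedBall 0 1) (P : Set (EuclideanSpace ℝ (degLE d m)))) :
    covN (δ + η) (UBall d σ (B2 d)) ≤ #P := by
  set K := degLE d m
  rw [← Fintype.card_coe]
  refine covN_le_card (fun p x => ⟪(p : EuclideanSpace ℝ K), ekVec d σ K x⟫)
    (fun p => ⟨‖(p : EuclideanSpace ℝ K)‖, fun x => ?_⟩) ?_
  · exact (abs_real_inner_le_norm _ _).trans
      (mul_le_of_le_one_right (norm_nonneg _) (norm_ekVec_le_one K x))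
  rintro f ⟨a, ha_sum, ha_le, habs, hf⟩
  set α : EuclideanSpace ℝ K := WithLp.toLp 2 fun k => a k
  have hα : α ∈ closedBall 0 1 := by
    rw [mem_closedBall_zero_iff, ← sq_le_one_iff₀ (norm_nonneg _), EuclideanSpace.norm_sq_eq]
    simpa [α, sum_attach K fun k => a k ^ 2] using
      (ha_sum.sum_le_tsum K fun _ _ => sq_nonneg _).trans ha_le
  obtain ⟨p, hp, hαp⟩ := hP hα
  refine ⟨⟨p, hp⟩, fun x => ?_⟩
  set v := ekVec d σ K x
  have hhead : ∑ k ∈ K, a k * ek d σ k x = ⟪α, v⟫ := by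
    simp [α, v, ekVec, PiLp.inner_apply, mul_comm, sum_attach K fun k => a k * ek d σ k x]
  have hαp' : ‖α - p‖ ≤ δ := by
    rwa [← dist_eq_norm, ← coe_nndist, NNReal.coe_le_coe, ← ENNReal.coe_le_coe, ← edist_nndist]
  have hx : ‖(x : EuclideanSpace ℝ (Fin d))‖ ≤ 1 := mem_closedBall_zero_iff.1 x.2
  rw [hf x, ← (habs x).of_abs.sum_add_tsum_subtype_compl K, hhead]
  calc |⟪α, v⟫ + ∑' k : {k // k ∉ K}, a k * ek d σ k x - ⟪(p : EuclideanSpace ℝ K), v⟫|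
      = |⟪α - p, v⟫ + ∑' k : {k // k ∉ K}, a k * ek d σ k x| := by rw [inner_sub_left]; ring_nf
    _ ≤ |⟪α - p, v⟫| + |∑' k : {k // k ∉ K}, a k * ek d σ k x| := abs_add_le _ _
    _ ≤ δ * 1 + η := by
        gcongr
        · exact (abs_real_inner_le_norm _ _).trans (by gcongr; exact norm_ekVec_le_one K x)
        · exact (abs_tsum_compl_degLE_le ha_sum ha_le hx).trans hη
    _ = δ + η := by rw [mul_one]

lemma covN_UBall_B2_le_pow {m : ℕ} {ε : ℝ} (hε : 0 < ε) (hε43 : ε ≤ 4 / 3)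
    (htail : √((2 * σ ^ 2) ^ (m + 1) / (m + 1)!) ≤ ε / 4) :
    (covN ε (UBall d σ (B2 d)) : ℝ) ≤ (4 / ε) ^ #(degLE d m) := by
  set δ := (3 * ε / 4).toNNReal
  have hδ : (δ : ℝ) = 3 * ε / 4 := Real.coe_toNNReal _ (by positivity)
  obtain ⟨P, hPcard, hP⟩ := exists_finset_isCover_closedBall (E := EuclideanSpace ℝ (degLE d m))
    (Real.toNNReal_pos.2 (by positivity : 0 < 3 * ε / 4)) zero_le_one
  rw [finrank_euclideanSpace, Fintype.card_coe, hδ, mul_one] at hPcard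
  have hcov := covN_UBall_B2_le_card htail hP
  rw [hδ, show 3 * ε / 4 + ε / 4 = ε by ring] at hcov
  calc (covN ε (UBall d σ (B2 d)) : ℝ) ≤ #P := by exact_mod_cast hcov
    _ ≤ (1 + 2 / (3 * ε / 4)) ^ #(degLE d m) := hPcard
    _ ≤ (4 / ε) ^ #(degLE d m) := by
        gcongr
        rw [le_div_iff₀ hε]
        field_simp
        linarith

end Covering

lemma sqrt_pow_div_factorial_floor_le {σ w y : ℝ} (hσ : σ ≠ 0) (hw0 : 0 < w)
    (hw : w * exp w = y / (exp 1 * σ ^ 2)) :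
    √((2 * σ ^ 2) ^ (⌊2 * y / w⌋₊ + 1) / (⌊2 * y / w⌋₊ + 1)!) ≤ exp (-y) := by
  set m := ⌊2 * y / w⌋₊
  have hm : 2 * y < w * (m + 1) := (div_lt_iff₀' hw0).1 (Nat.lt_floor_add_one _)
  have hdeg : 2 * σ ^ 2 * exp 1 * exp w = 2 * y / w := by
    rw [eq_div_iff (by positivity)] at hw
    field_simp
    linear_combination hw
  have hM : 2 * σ ^ 2 * exp 1 * exp w ≤ ((m + 1 : ℕ) : ℝ) := by
    rw [hdeg]; exact_mod_cast (Nat.lt_floor_add_one _).le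
  calc √((2 * σ ^ 2) ^ (m + 1) / (m + 1)!) ≤ √(exp (-(w * (m + 1 : ℕ)))) :=
        sqrt_le_sqrt (pow_div_factorial_le_exp_neg_mul (by positivity) m.succ_pos hM)
    _ ≤ √(exp (-y) ^ 2) := by
        rw [← exp_nat_mul]
        gcongr
        push_cast
        linarith
    _ = exp (-y) := sqrt_sq (exp_nonneg _)

lemma log_natCast_le_mul_log {n k : ℕ} {b : ℝ} (hb : 1 ≤ b) (h : (n : ℝ) ≤ b ^ k) :
    log n ≤ k * log b := by
  rcases n.eq_zero_or_pos with rfl | hn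
  · simpa using mul_nonneg (Nat.cast_nonneg k) (log_nonneg hb)
  · rw [← log_pow]
    exact log_le_log (by exact_mod_cast hn) h

theorem log_covN_UBall_le_gbinom_mul_general (d : ℕ) (σ : ℝ) (hσ : 0 < σ)
    (ε : ℝ) (hε : 0 < ε) (hε1 : ε ≤ 1)
    (y w : ℝ) (hy : y = Real.log (4 / ε))
    (hwpos : 0 < w) (hw : w * Real.exp w = y / (Real.exp 1 * σ ^ 2)) :
    Real.log (covN ε (UBall d σ (B2 d))) ≤ gbinom (2 * y / w) d * y := by
  have hy0 : 0 < y := hy ▸ log_pos (by rw [lt_div_iff₀ hε]; linarith)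
  have htail : √((2 * σ ^ 2) ^ (⌊2 * y / w⌋₊ + 1) / (⌊2 * y / w⌋₊ + 1)!) ≤ ε / 4 :=
    (sqrt_pow_div_factorial_floor_le hσ.ne' hwpos hw).trans_eq
      (by rw [hy, exp_neg, exp_log (by positivity), inv_div])
  calc Real.log (covN ε (UBall d σ (B2 d))) ≤ #(degLE d ⌊2 * y / w⌋₊) * Real.log (4 / ε) :=
        log_natCast_le_mul_log (by rw [le_div_iff₀ hε]; linarith)
          (covN_UBall_B2_le_pow hε (by linarith) htail)
    _ ≤ gbinom (2 * y / w) d * y := by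
        rw [← hy, card_degLE, ← gbinom_natCast]
        exact mul_le_mul_of_nonneg_right
          (gbinom_mono d (Nat.cast_nonneg _) (Nat.floor_le (by positivity))) hy0.le

theorem log_covN_UBall_le_gbinom_mul (d : ℕ) (hd : 1 ≤ d) (σ : ℝ) (hσ : 0 < σ)
    (ε : ℝ) (hε : 0 < ε) (hε1 : ε ≤ 1)
    (y w : ℝ) (hy : y = Real.log (4 / ε))
    (hwpos : 0 < w) (hw : w * Real.exp w = y / (Real.exp 1 * σ ^ 2)) :
    Real.log (covN ε (UBall d σ (B2 d))) ≤ gbinom (2 * y / w) d * y :=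
  log_covN_UBall_le_gbinom_mul_general d σ hσ ε hε hε1 y w hy hwpos hw
end

section
/- Let 0 < p₀ ≤ 1/e, let w₀ > 0 be the unique positive real with w₀·e^{w₀} = 2/p₀, and set C₀ := e·p₀·ln(1/p₀) + (2 + 1/e)·2^{1+p₀}·exp(1/w₀). Then for every integer d ≥ 1 and every 0 < p ≤ p₀ the following holds: letting w > 0 be the unique positive real with w·e^{w} = (d+1)/p and t₀ := (2(d+1)·4^{p/(d+1)}/(e·p·w))·exp(1/w), one has binom(t₀+d, d)·((d+1)/(e·p))·4^{p/(d+1)} ≤ (1/2)·C₀^d·sqrt(d)·(1/p)^{d+1}/(ln(1/p))^d. -/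
/-!
Bounding each factor `t + i` of the product by `t + d` and `d!` from below by Stirling gives
`binom(t + d, d) ≤ ((t + d) e / d)^d / √(2πd)`. Writing `L = ln (1/p)`, the defining equation
`w e^w = (d + 1)/p` gives `L = w + ln (w/(d + 1)) ≤ w + w/((d + 1) e)`, so `(d + 1) L ≤ (2 + 1/e) d w`
and the factor `1/w` in `t₀` can be traded for `1/L`. Together with `w₀ ≤ w`,
`4^{p/(d+1)} ≤ 2^p ≤ 2^{p₀}` and the monotonicity of `x ln (1/x)` on `(0, 1/e]`, this yields
`(t₀ + d) e p L ≤ C₀ d`. What remains, `(d + 1) 4^{p/(d+1)} / (e √(2πd))`, is at most `√d / 2`.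
-/

open Real Finset Nat

lemma gbinom_le_pow_div_factorial {t : ℝ} (ht : -1 ≤ t) (d : ℕ) :
    gbinom t d ≤ (t + d) ^ d / d ! := by
  unfold gbinom
  gcongr
  calc ∏ i ∈ range d, (t + i + 1) ≤ ∏ _i ∈ range d, (t + d) := by
        refine prod_le_prod (fun i _ ↦ by linarith [i.cast_nonneg (α := ℝ)]) fun i hi ↦ ?_
        have : (i : ℝ) + 1 ≤ d := by exact_mod_cast mem_range.mp hi
        linarith
    _ = (t + d) ^ d := by rw [prod_const, card_range]

lemma gbinom_le_stirling {t : ℝ} (ht : -1 ≤ t) {d : ℕ} (hd : 1 ≤ d) :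
    gbinom t d ≤ ((t + d) * exp 1 / d) ^ d / √(2 * π * d) := by
  have hd' : (1 : ℝ) ≤ d := by exact_mod_cast hd
  calc gbinom t d ≤ (t + d) ^ d / d ! := gbinom_le_pow_div_factorial ht d
    _ ≤ (t + d) ^ d / (√(2 * π * d) * (d / exp 1) ^ d) := by
        gcongr
        · have : 0 ≤ t + d := by linarith
          positivity
        · exact Stirling.le_factorial_stirling d
    _ = ((t + d) * exp 1 / d) ^ d / √(2 * π * d) := by
        rw [div_mul_eq_div_div_swap, ← div_pow, div_div_eq_mul_div]

lemma log_le_div_exp_one {u : ℝ} (hu : 0 < u) : log u ≤ u / exp 1 := by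
  have h := log_le_sub_one_of_pos (div_pos hu (exp_pos 1))
  rw [log_div hu.ne' (exp_ne_zero 1), log_exp] at h
  linarith

lemma log_mul_exp_div_le {c w : ℝ} (hc : 0 < c) (hw : 0 < w) :
    log (w * exp w / c) ≤ w + w / (c * exp 1) := by
  have h := log_le_div_exp_one (div_pos hw hc)
  rw [mul_div_right_comm, log_mul (div_pos hw hc).ne' (exp_ne_zero w), log_exp, div_div] at *
  linarith

lemma le_of_mul_exp_le_mul_exp {x y : ℝ} (hy : 0 ≤ y) (h : x * exp x ≤ y * exp y) : x ≤ y := by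
  by_contra! hyx
  exact h.not_gt (mul_lt_mul'' hyx (exp_lt_exp.mpr hyx) hy (exp_pos y).le)

lemma mul_log_inv_le_of_le {p p₀ : ℝ} (hp : 0 < p) (hpp₀ : p ≤ p₀) (hp₀ : p₀ ≤ 1 / exp 1) :
    p * log (1 / p) ≤ p₀ * log (1 / p₀) := by
  have hmem : ∀ {x}, 0 < x → x ≤ p₀ → x ∈ Set.Icc 0 (exp (-1)) := fun hx hxp ↦
    ⟨hx.le, by rw [exp_neg, inv_eq_one_div]; linarith⟩
  have := mul_log_strictAntiOn.antitoneOn (hmem hp hpp₀) (hmem (hp.trans_le hpp₀) le_rfl) hpp₀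
  simp only [one_div, log_inv, mul_neg]
  linarith

lemma succ_mul_log_inv_le {d p w : ℝ} (hd : 1 ≤ d) (hw : 0 < w)
    (hwe : w * exp w = (d + 1) / p) :
    (d + 1) * log (1 / p) ≤ (2 + 1 / exp 1) * d * w := by
  have hd0 : 0 < d + 1 := by linarith
  have hinv : 1 / p = w * exp w / (d + 1) := by
    rw [hwe, div_div_cancel_left' hd0.ne', one_div]
  have hL := mul_le_mul_of_nonneg_left (hinv ▸ log_mul_exp_div_le hd0 hw) hd0.le
  have hdw : w ≤ d * w := by nlinarith
  have hdwe : w / exp 1 ≤ d * w / exp 1 := by gcongr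
  calc (d + 1) * log (1 / p) ≤ (d + 1) * (w + w / ((d + 1) * exp 1)) := hL
    _ = (d + 1) * w + w / exp 1 := by field_simp
    _ ≤ 2 * (d * w) + d * w / exp 1 := by linarith
    _ = (2 + 1 / exp 1) * d * w := by ring

lemma mul_log_inv_le_of_mul_exp_eq {d p w A : ℝ} (hd : 1 ≤ d) (hp : 0 < p) (hw : 0 < w)
    (hwe : w * exp w = (d + 1) / p) (hA : 0 ≤ A) :
    2 * (d + 1) * A / (exp 1 * p * w) * exp (1 / w) * exp 1 * (p * log (1 / p)) ≤
      (2 + 1 / exp 1) * (2 * A) * exp (1 / w) * d := by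
  calc _ = 2 * A * exp (1 / w) * ((d + 1) * log (1 / p)) / w := by field_simp
    _ ≤ 2 * A * exp (1 / w) * ((2 + 1 / exp 1) * d * w) / w := by
        gcongr 2 * A * exp (1 / w) * ?_ / w
        exact succ_mul_log_inv_le hd hw hwe
    _ = (2 + 1 / exp 1) * (2 * A) * exp (1 / w) * d := by field_simp

lemma four_rpow_div_le_two_rpow {p d : ℝ} (hp : 0 ≤ p) (hd : 1 ≤ d) :
    (4 : ℝ) ^ (p / (d + 1)) ≤ 2 ^ p := by
  rw [show (4 : ℝ) = 2 ^ (2 : ℝ) by norm_num, ← rpow_mul zero_le_two]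
  refine rpow_le_rpow_of_exponent_le one_le_two ?_
  rw [mul_div_assoc', div_le_iff₀ (by linarith)]
  nlinarith

lemma four_le_sqrt_pi_mul_exp_one : 4 ≤ √π * exp 1 := by
  have hπ : 1.7 ≤ √π := (le_sqrt' (by norm_num)).mpr (by nlinarith [pi_gt_three])
  nlinarith [exp_one_gt_d9]

lemma succ_mul_div_le_sqrt {d A : ℝ} (hd : 1 ≤ d) (hA : A ≤ √2) :
    (d + 1) * A / (exp 1 * √(2 * π * d)) ≤ √d / 2 := by
  have hsqrt : √(2 * π * d) * √d = √2 * √π * d := by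
    rw [sqrt_mul (by positivity), sqrt_mul zero_le_two, mul_assoc, mul_self_sqrt (by linarith)]
  rw [div_le_div_iff₀ (by positivity) two_pos]
  have hd2 : (d + 1) * 2 ≤ (√π * exp 1) * d := by nlinarith [four_le_sqrt_pi_mul_exp_one]
  calc (d + 1) * A * 2 ≤ (d + 1) * √2 * 2 := by gcongr
    _ ≤ √2 * (√π * exp 1) * d := by nlinarith [mul_le_mul_of_nonneg_left hd2 (sqrt_nonneg 2)]
    _ = √d * (exp 1 * √(2 * π * d)) := by linear_combination (-exp 1) * hsqrt

lemma add_mul_exp_one_mul_log_inv_le {d p p₀ w w₀ : ℝ} (hd : 1 ≤ d) (hp : 0 < p) (hpp : p ≤ p₀)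
    (hp₀e : p₀ ≤ 1 / exp 1) (hw₀ : 0 < w₀) (hw₀e : w₀ * exp w₀ = 2 / p₀) (hw : 0 < w)
    (hwe : w * exp w = (d + 1) / p) :
    (2 * (d + 1) * 4 ^ (p / (d + 1)) / (exp 1 * p * w) * exp (1 / w) + d) * exp 1 *
        (p * log (1 / p)) ≤
      (exp 1 * p₀ * log (1 / p₀) + (2 + 1 / exp 1) * 2 ^ (1 + p₀) * exp (1 / w₀)) * d := by
  have hA : (4 : ℝ) ^ (p / (d + 1)) ≤ 2 ^ p₀ :=
    (four_rpow_div_le_two_rpow hp.le hd).trans (rpow_le_rpow_of_exponent_le one_le_two hpp)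
  have hw₀w : w₀ ≤ w := le_of_mul_exp_le_mul_exp hw.le <| by
    rw [hw₀e, hwe]; exact div_le_div₀ (by positivity) (by linarith) hp hpp
  have hwidth := (mul_log_inv_le_of_mul_exp_eq hd hp hw hwe (by positivity)).trans <|
    show (2 + 1 / exp 1) * (2 * 4 ^ (p / (d + 1))) * exp (1 / w) * d ≤
        (2 + 1 / exp 1) * 2 ^ (1 + p₀) * exp (1 / w₀) * d by
      rw [rpow_add two_pos, rpow_one]
      gcongr
  have hentropy : d * exp 1 * (p * log (1 / p)) ≤ d * exp 1 * (p₀ * log (1 / p₀)) :=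
    mul_le_mul_of_nonneg_left (mul_log_inv_le_of_le hp hpp hp₀e) (by positivity)
  linarith

theorem poly_const_growth_in_p_general (p₀ : ℝ) (hp₀e : p₀ ≤ 1 / Real.exp 1)
    (w₀ : ℝ) (hw₀pos : 0 < w₀) (hw₀ : w₀ * Real.exp w₀ = 2 / p₀)
    (C₀ : ℝ)
    (hC₀ : C₀ = Real.exp 1 * p₀ * Real.log (1 / p₀) +
      (2 + 1 / Real.exp 1) * (2 : ℝ) ^ (1 + p₀) * Real.exp (1 / w₀)) :
    ∀ d : ℕ, 1 ≤ d → ∀ p : ℝ, 0 < p → p ≤ p₀ →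
      ∀ w : ℝ, 0 < w → w * Real.exp w = ((d : ℝ) + 1) / p →
        gbinom (2 * ((d : ℝ) + 1) * (4 : ℝ) ^ (p / ((d : ℝ) + 1)) /
            (Real.exp 1 * p * w) * Real.exp (1 / w)) d *
          (((d : ℝ) + 1) / (Real.exp 1 * p)) * (4 : ℝ) ^ (p / ((d : ℝ) + 1)) ≤
        1 / 2 * C₀ ^ d * Real.sqrt d * ((1 / p) ^ (d + 1) / (Real.log (1 / p)) ^ d) := by
  intro d hd p hp hpp w hw hwe
  have hd' : (1 : ℝ) ≤ d := by exact_mod_cast hd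
  have hp2 : p ≤ 1 / 2 := by
    linarith [one_div_le_one_div_of_le two_pos (show 2 ≤ exp 1 by linarith [exp_one_gt_d9])]
  set A := (4 : ℝ) ^ (p / ((d : ℝ) + 1))
  set t := 2 * ((d : ℝ) + 1) * A / (exp 1 * p * w) * exp (1 / w)
  set L := log (1 / p)
  have hL : 0 < L := log_pos (one_lt_one_div hp (by linarith))
  have hkey : (t + d) * exp 1 / d ≤ C₀ / (p * L) := by
    rw [div_le_div_iff₀ (by positivity) (by positivity), hC₀]
    exact add_mul_exp_one_mul_log_inv_le hd' hp hpp hp₀e hw₀pos hw₀ hw hwe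
  have hbase : 0 ≤ C₀ / (p * L) := le_trans (by positivity) hkey
  have hA : A ≤ √2 := (four_rpow_div_le_two_rpow hp.le hd').trans <|
    (rpow_le_rpow_of_exponent_le one_le_two hp2).trans_eq (sqrt_eq_rpow 2).symm
  calc gbinom t d * ((d + 1) / (exp 1 * p)) * A
      ≤ ((t + d) * exp 1 / d) ^ d / √(2 * π * d) * ((d + 1) / (exp 1 * p)) * A := by
        gcongr; exact gbinom_le_stirling (by linarith [show 0 ≤ t by positivity]) hd
    _ ≤ (C₀ / (p * L)) ^ d / √(2 * π * d) * ((d + 1) / (exp 1 * p)) * A := by gcongr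
    _ = (C₀ / (p * L)) ^ d * (1 / p) * ((d + 1) * A / (exp 1 * √(2 * π * d))) := by ring
    _ ≤ (C₀ / (p * L)) ^ d * (1 / p) * (√d / 2) :=
        mul_le_mul_of_nonneg_left (succ_mul_div_le_sqrt hd' hA)
          (mul_nonneg (pow_nonneg hbase d) (by positivity))
    _ = 1 / 2 * C₀ ^ d * √d * ((1 / p) ^ (d + 1) / L ^ d) := by ring

theorem poly_const_growth_in_p (p₀ : ℝ) (hp₀ : 0 < p₀) (hp₀e : p₀ ≤ 1 / Real.exp 1)
    (w₀ : ℝ) (hw₀pos : 0 < w₀) (hw₀ : w₀ * Real.exp w₀ = 2 / p₀)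
    (C₀ : ℝ)
    (hC₀ : C₀ = Real.exp 1 * p₀ * Real.log (1 / p₀) +
      (2 + 1 / Real.exp 1) * (2 : ℝ) ^ (1 + p₀) * Real.exp (1 / w₀)) :
    ∀ d : ℕ, 1 ≤ d → ∀ p : ℝ, 0 < p → p ≤ p₀ →
      ∀ w : ℝ, 0 < w → w * Real.exp w = ((d : ℝ) + 1) / p →
        gbinom (2 * ((d : ℝ) + 1) * (4 : ℝ) ^ (p / ((d : ℝ) + 1)) /
            (Real.exp 1 * p * w) * Real.exp (1 / w)) d *
          (((d : ℝ) + 1) / (Real.exp 1 * p)) * (4 : ℝ) ^ (p / ((d : ℝ) + 1)) ≤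
        1 / 2 * C₀ ^ d * Real.sqrt d * ((1 / p) ^ (d + 1) / (Real.log (1 / p)) ^ d) :=
  poly_const_growth_in_p_general p₀ hp₀e w₀ hw₀pos hw₀ C₀ hC₀
end

section
/- Fix an integer d ≥ 1 and σ > 0. For y > 0 let w(y) > 0 be the unique positive real with w(y)·e^{w(y)} = y/(e·σ²). Then binom(2y/w(y) + d, d)·(ln(y)/y)^d converges to 2^d/d! as y → ∞. -/
/-!
Taking logarithms in `w e^w = y / (e σ²)` gives `log y = w + log w + log (e σ²)`, so `w → ∞`
and `log y / w → 1`. The `k`-th factor of `binom(t + d, d) · s^d`, with `t = 2y/w` and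
`s = log y / y`, is `(t + k) s / k = 2 (log y / w) / k + log y / y`, which tends to `2 / k`.
-/

open Real Filter

theorem gbinom_mul_pow_eq_prod (t s : ℝ) (d : ℕ) :
    gbinom t d * s ^ d = (∏ i ∈ Finset.range d, (t + i + 1) * s) / d.factorial := by
  rw [Finset.prod_mul_distrib, Finset.prod_const, Finset.card_range, gbinom]
  ring

theorem Filter.Tendsto.gbinom_mul_pow {α : Type*} {l : Filter α} {t s : α → ℝ} {a : ℝ}
    (hts : Tendsto (fun x => t x * s x) l (nhds a)) (hs : Tendsto s l (nhds 0)) (d : ℕ) :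
    Tendsto (fun x => gbinom (t x) d * s x ^ d) l (nhds (a ^ d / d.factorial)) := by
  have hlim : a ^ d / d.factorial = (∏ _i ∈ Finset.range d, a) / d.factorial := by
    rw [Finset.prod_const, Finset.card_range]
  simp only [gbinom_mul_pow_eq_prod, hlim]
  refine (tendsto_finsetProd _ fun i _ => ?_).div_const _
  have hfactor : Tendsto (fun x => t x * s x + ((i : ℝ) + 1) * s x) l (nhds a) := by
    simpa using hts.add (hs.const_mul ((i : ℝ) + 1))
  exact hfactor.congr fun x => by ring

theorem Real.log_eq_of_mul_exp_eq_div {w y c : ℝ} (hw : 0 < w) (hy : 0 < y) (hc : 0 < c)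
    (h : w * exp w = y / c) : log y = w + log w + log c := by
  have hlog := congrArg log h
  rw [log_mul hw.ne' (exp_ne_zero _), log_exp, log_div hy.ne' hc.ne'] at hlog
  linarith

theorem Real.tendsto_log_div_self_atTop : Tendsto (fun x => log x / x) atTop (nhds 0) := by
  simpa using tendsto_pow_log_div_mul_add_atTop 1 0 1 one_ne_zero

section LambertW

variable {c : ℝ} {w : ℝ → ℝ}

theorem tendsto_atTop_of_mul_exp_eq_div (hc : 0 < c)
    (hw : ∀ y : ℝ, 0 < y → 0 < w y ∧ w y * exp (w y) = y / c) :
    Tendsto w atTop atTop := by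
  have hlower : ∀ᶠ y in atTop, (log y - log c) / 2 ≤ w y := by
    filter_upwards [eventually_gt_atTop 0] with y hy
    obtain ⟨hwy, heq⟩ := hw y hy
    have := log_le_sub_one_of_pos hwy
    linarith [log_eq_of_mul_exp_eq_div hwy hy hc heq]
  refine tendsto_atTop_mono' atTop hlower ?_
  exact (tendsto_atTop_add_const_right _ (-log c) tendsto_log_atTop).atTop_div_const two_pos

theorem tendsto_log_div_of_mul_exp_eq_div (hc : 0 < c)
    (hw : ∀ y : ℝ, 0 < y → 0 < w y ∧ w y * exp (w y) = y / c) :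
    Tendsto (fun y => log y / w y) atTop (nhds 1) := by
  have hwtop := tendsto_atTop_of_mul_exp_eq_div hc hw
  have heq : ∀ᶠ y in atTop, 1 + log (w y) / w y + log c / w y = log y / w y := by
    filter_upwards [eventually_gt_atTop 0] with y hy
    obtain ⟨hwy, hyc⟩ := hw y hy
    rw [log_eq_of_mul_exp_eq_div hwy hy hc hyc]
    field_simp
  have hlog : Tendsto (fun y => log (w y) / w y) atTop (nhds 0) :=
    tendsto_log_div_self_atTop.comp hwtop
  refine Tendsto.congr' heq ?_
  simpa using (tendsto_const_nhds.add hlog).add (tendsto_const_nhds.div_atTop hwtop)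

end LambertW

theorem range_const_tendsto_general (d : ℕ) (σ : ℝ) (hσ : 0 < σ)
    (w : ℝ → ℝ) (hw : ∀ y : ℝ, 0 < y → 0 < w y ∧
      w y * Real.exp (w y) = y / (Real.exp 1 * σ ^ 2)) :
    Tendsto (fun y : ℝ => gbinom (2 * y / w y) d * (Real.log y / y) ^ d) atTop
      (nhds (2 ^ d / (Nat.factorial d : ℝ))) := by
  have hc : 0 < Real.exp 1 * σ ^ 2 := by positivity
  have hprod : Tendsto (fun y => 2 * y / w y * (log y / y)) atTop (nhds 2) := by
    have hlim := (tendsto_log_div_of_mul_exp_eq_div hc hw).const_mul 2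
    rw [mul_one] at hlim
    refine hlim.congr' ?_
    filter_upwards [eventually_gt_atTop 0] with y hy
    field_simp
  exact hprod.gbinom_mul_pow tendsto_log_div_self_atTop d

theorem range_const_tendsto (d : ℕ) (hd : 1 ≤ d) (σ : ℝ) (hσ : 0 < σ)
    (w : ℝ → ℝ) (hw : ∀ y : ℝ, 0 < y → 0 < w y ∧
      w y * Real.exp (w y) = y / (Real.exp 1 * σ ^ 2)) :
    Tendsto (fun y : ℝ => gbinom (2 * y / w y) d * (Real.log y / y) ^ d) atTop
      (nhds (2 ^ d / (Nat.factorial d : ℝ))) :=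
  range_const_tendsto_general d σ hσ w hw
end
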